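/- arXiv:1808.02686 — 2 statements merged into one kernel-verified Lean document; each statement's English description precedes it below -/
import Mathlib

section
/- Let T = △pqu be a triangle, let L* be a line crossing both segment uw and segment uq, where w is a point such that the segment L* ∩ △uwq lies outside the interior of a convex set μ containing u. Then every point of μ that lies in the triangle △uwq lies in the triangle with vertices u, a, b, where a = L* ∩ uw and b = L* ∩ uq. -/
/-!
Let `f` be the affine function vanishing on `L*`. It has no zero on the convex set `μ ∩ △uwq`
(the zeros of `f` in `△uwq` form the segment `ab`), so `f x` has the sign of `f u` for every
`x` there. Writing `x = u + α (a - u) + β (b - u)` with `α, β ≥ 0` (possible since `a`, `b` lie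
on the sides `uw`, `uq` and differ from `u`), affinity and `f a = f b = 0` give
`f x = (1 - α - β) f u`, hence `α + β < 1`, i.e. `x ∈ △uab`.
-/

open Set

section

variable {𝕜 E F : Type*} [Ring 𝕜] [AddCommGroup E] [Module 𝕜 E] [AddCommGroup F] [Module 𝕜 F]

theorem AffineMap.apply_add_smul_sub_add_smul_sub (f : E →ᵃ[𝕜] F) (u a b : E) (α β : 𝕜) :
    f (u + α • (a - u) + β • (b - u)) = f u + α • (f a - f u) + β • (f b - f u) := by
  rw [add_assoc, add_comm u, ← vadd_eq_add, f.map_vadd]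
  simp only [map_add, map_smul, ← vsub_eq_sub, f.linearMap_vsub, vadd_eq_add]
  abel

end

section

variable {𝕜 E : Type*} [Field 𝕜] [LinearOrder 𝕜] [IsStrictOrderedRing 𝕜]
  [AddCommGroup E] [Module 𝕜 E]

theorem Convex.mul_pos_of_forall_ne_zero {s : Set E} (hs : Convex 𝕜 s) (f : E →ᵃ[𝕜] 𝕜)
    (hf : ∀ y ∈ s, f y ≠ 0) {x y : E} (hx : x ∈ s) (hy : y ∈ s) : 0 < f x * f y := by
  by_contra! hxy
  have hzero : (0 : 𝕜) ∈ segment 𝕜 (f x) (f y) := by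
    rw [segment_eq_uIcc, mem_uIcc]
    rcases (hf x hx).lt_or_gt with h | h
    · exact .inl ⟨h.le, by nlinarith⟩
    · exact .inr ⟨by nlinarith, h.le⟩
  rw [← image_segment] at hzero
  obtain ⟨z, hz, hfz⟩ := hzero
  exact hf z (hs.segment_subset hx hy hz) hfz

theorem mem_convexHull_triple_iff {u a b x : E} :
    x ∈ convexHull 𝕜 {u, a, b} ↔
      ∃ α β : 𝕜, 0 ≤ α ∧ 0 ≤ β ∧ α + β ≤ 1 ∧ x = u + α • (a - u) + β • (b - u) := by
  rw [← convexJoin_singleton_segment, convexJoin_singleton_left, mem_iUnion₂]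
  simp only [segment_eq_image', mem_image]
  constructor
  · rintro ⟨_, ⟨r, ⟨hr0, hr1⟩, rfl⟩, p, ⟨hp0, hp1⟩, rfl⟩
    exact ⟨p * (1 - r), p * r, by nlinarith, by positivity, by nlinarith, by module⟩
  · rintro ⟨α, β, hα, hβ, hαβ, rfl⟩
    rcases (add_nonneg hα hβ).eq_or_lt with h | h
    · obtain ⟨rfl, rfl⟩ : α = 0 ∧ β = 0 := ⟨by linarith, by linarith⟩
      exact ⟨a, ⟨0, ⟨le_rfl, zero_le_one⟩, by simp⟩, 0, ⟨le_rfl, zero_le_one⟩, by simp⟩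
    · refine ⟨_, ⟨β / (α + β), ⟨by positivity, (div_le_one h).2 (by linarith)⟩, rfl⟩,
        α + β, ⟨h.le, hαβ⟩, ?_⟩
      match_scalars <;> field_simp <;> ring

theorem exists_pos_sub_eq_inv_smul_of_mem_segment {u w a : E} (ha : a ∈ segment 𝕜 u w)
    (hau : a ≠ u) : ∃ s : 𝕜, 0 < s ∧ w - u = s⁻¹ • (a - u) := by
  rw [segment_eq_image'] at ha
  obtain ⟨s, ⟨hs0, -⟩, rfl⟩ := ha
  have hs : s ≠ 0 := by rintro rfl; simp at hau
  refine ⟨s, hs0.lt_of_ne' hs, ?_⟩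
  rw [add_sub_cancel_left, smul_smul, inv_mul_cancel₀ hs, one_smul]

theorem mem_convexHull_of_mul_pos {u w q a b x : E} (f : E →ᵃ[𝕜] 𝕜)
    (ha : a ∈ segment 𝕜 u w) (hb : b ∈ segment 𝕜 u q) (hfa : f a = 0) (hfb : f b = 0)
    (hx : x ∈ convexHull 𝕜 {u, w, q}) (hxu : 0 < f x * f u) :
    x ∈ convexHull 𝕜 {u, a, b} := by
  have hfu : f u ≠ 0 := by rintro h; simp [h] at hxu
  obtain ⟨s, hs, hw⟩ := exists_pos_sub_eq_inv_smul_of_mem_segment ha (by rintro rfl; exact hfu hfa)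
  obtain ⟨t, ht, hq⟩ := exists_pos_sub_eq_inv_smul_of_mem_segment hb (by rintro rfl; exact hfu hfb)
  obtain ⟨α, β, hα, hβ, -, rfl⟩ := mem_convexHull_triple_iff.1 hx
  rw [hw, hq, smul_smul, smul_smul] at hxu ⊢
  have hfx : f (u + (α * s⁻¹) • (a - u) + (β * t⁻¹) • (b - u))
      = (1 - α * s⁻¹ - β * t⁻¹) * f u := by
    rw [f.apply_add_smul_sub_add_smul_sub, hfa, hfb, smul_eq_mul, smul_eq_mul]
    ring
  rw [hfx] at hxu
  refine mem_convexHull_triple_iff.2 ⟨_, _, by positivity, by positivity, ?_, rfl⟩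
  nlinarith [mul_self_pos.2 hfu]

end

theorem stmt13_general
    (u w q a b : ℝ × ℝ)
    (A B C : ℝ)
    (Lstar : Set (ℝ × ℝ)) (hL : Lstar = {x : ℝ × ℝ | A * x.1 + B * x.2 = C})
    (ha : a ∈ segment ℝ u w ∩ Lstar)
    (hb : b ∈ segment ℝ u q ∩ Lstar)
    (hseg : Lstar ∩ convexHull ℝ ({u, w, q} : Set (ℝ × ℝ)) = segment ℝ a b)
    (μ : Set (ℝ × ℝ)) (hμ : Convex ℝ μ) (hu : u ∈ μ)
    (hdisj : Disjoint μ (segment ℝ a b)) :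
    ∀ x ∈ μ, x ∈ convexHull ℝ ({u, w, q} : Set (ℝ × ℝ)) →
      x ∈ convexHull ℝ ({u, a, b} : Set (ℝ × ℝ)) := by
  intro x hxμ hxT
  let f : ℝ × ℝ →ᵃ[ℝ] ℝ :=
    (A • LinearMap.fst ℝ ℝ ℝ + B • LinearMap.snd ℝ ℝ ℝ).toAffineMap - AffineMap.const ℝ _ C
  have hLf : ∀ y, y ∈ Lstar ↔ f y = 0 := fun y => by
    rw [hL, mem_ofPred_eq, ← sub_eq_zero]
    rfl
  have hf : ∀ y ∈ μ ∩ convexHull ℝ {u, w, q}, f y ≠ 0 := fun y hy hfy =>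
    disjoint_left.1 hdisj hy.1 (hseg ▸ ⟨(hLf y).2 hfy, hy.2⟩)
  have hfxu : 0 < f x * f u := (hμ.inter (convex_convexHull ℝ _)).mul_pos_of_forall_ne_zero f hf
    ⟨hxμ, hxT⟩ ⟨hu, subset_convexHull ℝ _ (mem_insert u _)⟩
  exact mem_convexHull_of_mul_pos f ha.1 hb.1 ((hLf a).1 ha.2) ((hLf b).1 hb.2) hxT hfxu

/-- consequence of Claim 1 in the proof of Proposition
`Prop:GoodEdge`. The line `L*` crosses the segments `uw` and `uq` at points
`a` and `b`, and the convex set `μ` contains `u` but is disjoint from the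
segment `ab = L* ∩ △uwq`.  Then every point of `μ` lying in the closed
triangle `△uwq` lies in the closed triangle `△uab`. -/
theorem stmt13
    (u w q a b : ℝ × ℝ)
    (A B C : ℝ) (hAB : (A, B) ≠ (0, 0))
    (Lstar : Set (ℝ × ℝ)) (hL : Lstar = {x : ℝ × ℝ | A * x.1 + B * x.2 = C})
    (ha : a ∈ segment ℝ u w ∩ Lstar)
    (hb : b ∈ segment ℝ u q ∩ Lstar)
    (hseg : Lstar ∩ convexHull ℝ ({u, w, q} : Set (ℝ × ℝ)) = segment ℝ a b)
    (μ : Set (ℝ × ℝ)) (hμ : Convex ℝ μ) (hu : u ∈ μ)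
    (hdisj : Disjoint μ (segment ℝ a b)) :
    ∀ x ∈ μ, x ∈ convexHull ℝ ({u, w, q} : Set (ℝ × ℝ)) →
      x ∈ convexHull ℝ ({u, a, b} : Set (ℝ × ℝ)) :=
  stmt13_general u w q a b A B C Lstar hL ha hb hseg μ hμ hu hdisj
end

section
/- Suppose f: (0,1] → ℝ≥0 is non-increasing, f(ε) = O(1) for ε ≥ ε̃ (a fixed constant), and satisfies f(ε) ≤ C·(ε^{-η}·f(ε^{1-β}) + ε^{-3/2-η}) for all ε < ε̃, where 0 < η < β/10 and 0 < β < 1/10 are constants. Then f(ε) = O(ε^{-3/2-γ}) for a constant γ > 0 depending only on η and β. -/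
/-!
Put `γ = 2η` and `s = 3/2 + γ`. Inserting the bound `f ≤ D ε^{-s}` at `ε^{1-β}` into the recursion
gives `C ε^{-η} (ε^{1-β})^{-s} = C ε^{βs-η} · ε^{-s}`, and `βs - η > 0` because `η < β/10`; so below a
threshold `ε₀` the recursive term costs at most half of `D ε^{-s}`, while the inhomogeneous term
`C ε^{-3/2-η} ≤ C ε^{-s}` costs at most the other half once `D ≥ 2C`. Since `ε^{(1-β)^n} → 1`, every
`ε` reaches `[ε₀, 1]`, where monotonicity gives the bound, after finitely many steps `ε ↦ ε^{1-β}`.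
-/

open Filter Topology

theorem exists_le_rpow_pow {θ ε ε₀ : ℝ} (hθ0 : 0 ≤ θ) (hθ1 : θ < 1) (hε : 0 < ε) (hε₀ : ε₀ < 1) :
    ∃ n : ℕ, ε₀ ≤ ε ^ (θ ^ n) := by
  have hpow : Tendsto (fun n : ℕ => θ ^ n) atTop (𝓝 0) :=
    tendsto_pow_atTop_nhds_zero_of_lt_one hθ0 hθ1
  have hrpow : Tendsto (fun n : ℕ => ε ^ (θ ^ n)) atTop (𝓝 1) := by
    simpa [Function.comp_def] using ((Real.continuousAt_const_rpow hε.ne').tendsto).comp hpow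
  exact (hrpow.eventually (eventually_ge_nhds hε₀)).exists

/-- Induction along the orbit of `ε ↦ ε ^ θ`, which leaves `(0, ε₀)` after finitely many steps. -/
theorem rpow_induction {θ ε₀ : ℝ} (hθ0 : 0 ≤ θ) (hθ1 : θ < 1) (hε₀ : ε₀ < 1) {Q : ℝ → Prop}
    (base : ∀ ε, ε₀ ≤ ε → ε ≤ 1 → Q ε)
    (step : ∀ ε, 0 < ε → ε < ε₀ → Q (ε ^ θ) → Q ε)
    {ε : ℝ} (hε : 0 < ε) (hε1 : ε ≤ 1) : Q ε := by
  obtain ⟨n, hn⟩ := exists_le_rpow_pow hθ0 hθ1 hε hε₀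
  induction n generalizing ε with
  | zero => exact base ε (by simpa using hn) hε1
  | succ n ih =>
    rcases le_or_gt ε₀ ε with hε₀ε | hεε₀
    · exact base ε hε₀ε hε1
    · refine step ε hε hεε₀ (ih (Real.rpow_pos_of_pos hε θ) (Real.rpow_le_one hε.le hε1 hθ0) ?_)
      rwa [← Real.rpow_mul hε.le, ← pow_succ']

theorem le_of_recurrence_step {C η θ p s ε D x y : ℝ} (hε : 0 < ε) (hε1 : ε ≤ 1) (hC : 0 ≤ C)
    (hps : p + η ≤ s) (hsmall : C * ε ^ ((1 - θ) * s - η) ≤ 1 / 2) (hD : 2 * C ≤ D)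
    (hx : x ≤ C * (ε ^ (-η) * y + ε ^ (-p - η))) (hy : y ≤ D * (ε ^ θ) ^ (-s)) :
    x ≤ D * ε ^ (-s) := by
  have hrec_term : ε ^ (-η) * (ε ^ θ) ^ (-s) = ε ^ ((1 - θ) * s - η) * ε ^ (-s) := by
    rw [← Real.rpow_mul hε.le, ← Real.rpow_add hε, ← Real.rpow_add hε]
    ring_nf
  have hinhom_term : ε ^ (-p - η) = ε ^ (s - p - η) * ε ^ (-s) := by
    rw [← Real.rpow_add hε]
    ring_nf
  have hgain : ε ^ (s - p - η) ≤ 1 := Real.rpow_le_one hε.le hε1 (by linarith)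
  have hpos : 0 ≤ ε ^ (-s) := (Real.rpow_pos_of_pos hε _).le
  have hD0 : 0 ≤ D := by linarith
  calc x ≤ C * (ε ^ (-η) * (D * (ε ^ θ) ^ (-s)) + ε ^ (-p - η)) := by
        refine hx.trans ?_
        gcongr
    _ = D * (C * ε ^ ((1 - θ) * s - η)) * ε ^ (-s) + C * ε ^ (s - p - η) * ε ^ (-s) := by
        rw [hinhom_term, mul_left_comm _ D, hrec_term]
        ring
    _ ≤ D * (1 / 2) * ε ^ (-s) + C * 1 * ε ^ (-s) := by gcongr
    _ ≤ D * ε ^ (-s) := by nlinarith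

theorem exists_pos_lt_mul_rpow_lt {C a εt δ : ℝ} (ha : 0 < a) (hεt : 0 < εt) (hδ : 0 < δ) :
    ∃ ε₀, 0 < ε₀ ∧ ε₀ < εt ∧ C * ε₀ ^ a < δ := by
  have hcont : Tendsto (fun ε : ℝ => C * ε ^ a) (𝓝 0) (𝓝 0) := by
    simpa [Real.zero_rpow ha.ne'] using
      ((Real.continuousAt_rpow_const 0 a (Or.inr ha.le)).tendsto).const_mul C
  have hsmall : ∀ᶠ ε in 𝓝[>] 0, C * ε ^ a < δ ∧ ε < εt :=
    ((hcont.eventually (gt_mem_nhds hδ)).and (gt_mem_nhds hεt)).filter_mono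
      nhdsWithin_le_nhds
  obtain ⟨ε₀, ⟨hsmall, hlt⟩, hpos⟩ := (hsmall.and self_mem_nhdsWithin).exists
  exact ⟨ε₀, hpos, hlt, hsmall⟩

theorem stmt15_general
    (f : ℝ → ℝ) (C η β εt : ℝ)
    (hC : 0 < C) (hη : 0 < η) (hηβ : η < β / 10)
    (hβ1 : β < 1 / 10)
    (hεt : 0 < εt) (hεt1 : εt < 1)
    (hmono : ∀ ε ε' : ℝ, 0 < ε → ε ≤ ε' → ε' ≤ 1 → f ε' ≤ f ε)
    (hrec : ∀ ε : ℝ, 0 < ε → ε < εt →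
      f ε ≤ C * (ε ^ (-η) * f (ε ^ (1 - β)) + ε ^ (-(3 / 2 : ℝ) - η))) :
    ∃ γ : ℝ, 0 < γ ∧ ∃ D : ℝ, 0 < D ∧
      ∀ ε : ℝ, 0 < ε → ε ≤ 1 → f ε ≤ D * ε ^ (-(3 / 2 : ℝ) - γ) := by
  obtain ⟨s, hs⟩ : ∃ s : ℝ, s = 3 / 2 + 2 * η := ⟨_, rfl⟩
  have ha : 0 < (1 - (1 - β)) * s - η := by rw [hs]; nlinarith
  obtain ⟨ε₀, hε₀, hε₀t, hsmall⟩ := exists_pos_lt_mul_rpow_lt (C := C) ha hεt one_half_pos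
  refine ⟨2 * η, by positivity, max (f ε₀) (2 * C), by positivity, fun ε hε hε1 => ?_⟩
  rw [show -(3 / 2 : ℝ) - 2 * η = -s by rw [hs]; ring]
  refine rpow_induction (θ := 1 - β) (Q := fun ε => f ε ≤ max (f ε₀) (2 * C) * ε ^ (-s))
    (by linarith) (by linarith) (hε₀t.trans hεt1) (fun ε hε₀ε hε1 => ?_) (fun ε hε hεε₀ hy => ?_) hε hε1
  · calc f ε ≤ f ε₀ := hmono ε₀ ε hε₀ hε₀ε hε1
      _ ≤ max (f ε₀) (2 * C) * 1 := by simp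
      _ ≤ max (f ε₀) (2 * C) * ε ^ (-s) := by
        gcongr
        exact Real.one_le_rpow_of_pos_of_le_one_of_nonpos (hε₀.trans_le hε₀ε) hε1 (by linarith)
  · have hsmall_ε : C * ε ^ ((1 - (1 - β)) * s - η) ≤ 1 / 2 :=
      le_trans (by gcongr) hsmall.le
    exact le_of_recurrence_step hε (hεε₀.trans (hε₀t.trans hεt1)).le hC.le (by linarith)
      hsmall_ε (le_max_right _ _) (hrec ε hε (hεε₀.trans hε₀t)) hy

/-- abstract form of the final recurrence
`Eq:RecurrenceComplete`.  If `f : (0,1] → ℝ≥0` is non-increasing, bounded on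
`[ε̃,1]`, and satisfies `f(ε) ≤ C·(ε^{-η}·f(ε^{1-β}) + ε^{-3/2-η})` for all
`ε < ε̃`, where `0 < η < β/10` and `0 < β < 1/10`, then
`f(ε) = O(ε^{-3/2-γ})` for some constant `γ > 0` depending only on `η, β`. -/
theorem stmt15
    (f : ℝ → ℝ) (C η β εt : ℝ)
    (hC : 0 < C) (hη : 0 < η) (hηβ : η < β / 10)
    (hβ : 0 < β) (hβ1 : β < 1 / 10)
    (hεt : 0 < εt) (hεt1 : εt < 1)
    (hnonneg : ∀ ε : ℝ, 0 < ε → ε ≤ 1 → 0 ≤ f ε)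
    (hmono : ∀ ε ε' : ℝ, 0 < ε → ε ≤ ε' → ε' ≤ 1 → f ε' ≤ f ε)
    (hbase : ∃ M : ℝ, ∀ ε : ℝ, εt ≤ ε → ε ≤ 1 → f ε ≤ M)
    (hrec : ∀ ε : ℝ, 0 < ε → ε < εt →
      f ε ≤ C * (ε ^ (-η) * f (ε ^ (1 - β)) + ε ^ (-(3 / 2 : ℝ) - η))) :
    ∃ γ : ℝ, 0 < γ ∧ ∃ D : ℝ, 0 < D ∧
      ∀ ε : ℝ, 0 < ε → ε ≤ 1 → f ε ≤ D * ε ^ (-(3 / 2 : ℝ) - γ) :=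
  stmt15_general f C η β εt hC hη hηβ hβ1 hεt hεt1 hmono hrec
end
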